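/- Let H be a Hilbert space, S(t) symmetric and K(t) skew-symmetric operator families, and f a smooth curve with Q(t) = ‖f(t)‖² > 0. Define N(t) = ⟨S(t) f(t), f(t)⟩ / Q(t). Then N'(t) ≥ Q(t)^{-1} [ ⟨S_t f + [S,K] f, f⟩ − (1/2) ‖∂_t f − S f − K f‖² ]. -/

import Mathlib

/-!
Write `x = f t`, `x' = f' t`, `A = S t`, `B = K t` and `w = x' - B x`. By the quotient rule and
the symmetry of `A`, `Q² N' = Q (re⟪S_t x, x⟫ + 2 re⟪A x, x'⟫) - 2 re⟪A x, x⟫ re⟪x, x'⟫`.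
Skew-symmetry of `B` gives `re⟪x, x'⟫ = re⟪x, w⟫` and `re⟪[A, B] x, x⟫ = 2 re⟪A x, B x⟫`, after
which the claimed bound reads `4 re⟪x, A x⟫ re⟪x, w⟫ ≤ ‖x‖² ‖A x + w‖²`: AM–GM followed by
Cauchy–Schwarz for `re⟪x, A x + w⟫`.
-/

open RCLike

open scoped InnerProductSpace ComplexInnerProductSpace

namespace LinearMap

variable {𝕜 E : Type*} [RCLike 𝕜] [NormedAddCommGroup E] [InnerProductSpace 𝕜 E]

def IsSkewSymmetric (T : E →ₗ[𝕜] E) : Prop :=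
  ∀ x y, ⟪T x, y⟫_𝕜 = -⟪x, T y⟫_𝕜

theorem IsSkewSymmetric.re_inner_apply_self {T : E →ₗ[𝕜] E} (hT : T.IsSkewSymmetric) (x : E) :
    re ⟪T x, x⟫_𝕜 = 0 := by
  have h := congrArg re (hT x x)
  rw [map_neg, inner_re_symm x] at h
  linarith

theorem IsSymmetric.re_inner_commutator_apply_self {A B : E →ₗ[𝕜] E} (hA : A.IsSymmetric)
    (hB : B.IsSkewSymmetric) (x : E) :
    re ⟪A (B x) - B (A x), x⟫_𝕜 = 2 * re ⟪A x, B x⟫_𝕜 := by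
  rw [inner_sub_left, map_sub, hA (B x) x, hB (A x) x, map_neg, inner_re_symm (B x)]
  ring

end LinearMap

theorem HasDerivAt.clm_apply_real {𝕜 E F : Type*} [NontriviallyNormedField 𝕜]
    [NormedAlgebra ℝ 𝕜] [NormedAddCommGroup E] [NormedSpace 𝕜 E] [NormedSpace ℝ E]
    [IsScalarTower ℝ 𝕜 E] [NormedAddCommGroup F] [NormedSpace 𝕜 F] [NormedSpace ℝ F]
    [IsScalarTower ℝ 𝕜 F] {c : ℝ → E →L[𝕜] F} {c' : E →L[𝕜] F} {u : ℝ → E} {u' : E} {t : ℝ}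
    (hc : HasDerivAt c c' t) (hu : HasDerivAt u u' t) :
    HasDerivAt (fun s => c s (u s)) (c' (u t) + c t u') t :=
  ((ContinuousLinearMap.restrictScalarsL 𝕜 E F ℝ ℝ).hasFDerivAt.comp_hasDerivAt t hc).clm_apply hu

section InnerProduct

variable {𝕜 E : Type*} [RCLike 𝕜] [NormedAddCommGroup E] [InnerProductSpace 𝕜 E]

theorem four_mul_re_inner_mul_re_inner_le (x y z : E) :
    4 * re ⟪x, y⟫_𝕜 * re ⟪x, z⟫_𝕜 ≤ ‖x‖ ^ 2 * ‖y + z‖ ^ 2 := by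
  have hcs : |re ⟪x, y + z⟫_𝕜| ≤ ‖x‖ * ‖y + z‖ :=
    (abs_re_le_norm _).trans (norm_inner_le_norm x (y + z))
  have hsq : (re ⟪x, y + z⟫_𝕜) ^ 2 ≤ (‖x‖ * ‖y + z‖) ^ 2 :=
    sq_le_sq.mpr (hcs.trans (le_abs_self _))
  rw [inner_add_right, map_add] at hsq
  nlinarith [sq_nonneg (re ⟪x, y⟫_𝕜 - re ⟪x, z⟫_𝕜)]

theorem LinearMap.IsSymmetric.two_mul_re_inner_mul_re_inner_le {A B : E →ₗ[𝕜] E}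
    (hA : A.IsSymmetric) (hB : B.IsSkewSymmetric) (x x' : E) :
    2 * re ⟪A x, x⟫_𝕜 * re ⟪x, x'⟫_𝕜 ≤
      ‖x‖ ^ 2 * (2 * re ⟪A x, x'⟫_𝕜 - re ⟪A (B x) - B (A x), x⟫_𝕜
        + ‖x' - A x - B x‖ ^ 2 / 2) := by
  obtain ⟨w, hw⟩ : ∃ w, x' - B x = w := ⟨_, rfl⟩
  have hxw : re ⟪x, x'⟫_𝕜 = re ⟪x, w⟫_𝕜 := by
    rw [← hw, inner_sub_right, map_sub, inner_re_symm x (B x), hB.re_inner_apply_self, sub_zero]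
  have hAxw : re ⟪A x, x'⟫_𝕜 = re ⟪A x, w⟫_𝕜 + re ⟪A x, B x⟫_𝕜 := by
    rw [← hw, inner_sub_right, map_sub, sub_add_cancel]
  have hres : x' - A x - B x = w - A x := by
    rw [← hw]; abel
  have hpar : ‖A x + w‖ ^ 2 = ‖w - A x‖ ^ 2 + 4 * re ⟪A x, w⟫_𝕜 := by
    rw [re_inner_eq_norm_add_mul_self_sub_norm_sub_mul_self_div_four, norm_sub_rev]
    ring
  have key := four_mul_re_inner_mul_re_inner_le (𝕜 := 𝕜) x (A x) w
  rw [inner_re_symm x (A x), hpar] at key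
  rw [hxw, hAxw, hres, hA.re_inner_commutator_apply_self hB]
  linear_combination key / 2

variable [NormedSpace ℝ E]

theorem HasDerivAt.norm_sq_of_rclike {f : ℝ → E} {f' : E} {t : ℝ} (hf : HasDerivAt f f' t) :
    HasDerivAt (‖f ·‖ ^ 2) (2 * re ⟪f t, f'⟫_𝕜) t := by
  have h := reCLM.hasFDerivAt.comp_hasDerivAt t (hf.inner 𝕜 hf)
  simp only [Function.comp_def, reCLM_apply, inner_self_eq_norm_sq, map_add] at h
  rwa [inner_re_symm f', ← two_mul] at h

theorem HasDerivAt.re_inner_clm_apply_self [IsScalarTower ℝ 𝕜 E] {S : ℝ → E →L[𝕜] E}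
    {S' : E →L[𝕜] E} {f : ℝ → E} {f' : E} {t : ℝ} (hS : HasDerivAt S S' t)
    (hf : HasDerivAt f f' t) (hsymm : (S t : E →ₗ[𝕜] E).IsSymmetric) :
    HasDerivAt (fun s => re ⟪S s (f s), f s⟫_𝕜)
      (re ⟪S' (f t), f t⟫_𝕜 + 2 * re ⟪S t (f t), f'⟫_𝕜) t := by
  have h := reCLM.hasFDerivAt.comp_hasDerivAt t ((hS.clm_apply_real hf).inner 𝕜 hf)
  have hSf' : re ⟪S t f', f t⟫_𝕜 = re ⟪S t (f t), f'⟫_𝕜 := by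
    rw [← ContinuousLinearMap.coe_coe, hsymm, inner_re_symm, ContinuousLinearMap.coe_coe]
  simp only [Function.comp_def, reCLM_apply, inner_add_left, map_add, hSf'] at h
  exact h.congr_deriv (by ring)

end InnerProduct

theorem frequency_function_derivative_lower_bound_general
    {H : Type*} [NormedAddCommGroup H] [InnerProductSpace ℂ H]
    (S K : ℝ → H →L[ℂ] H) (f : ℝ → H)
    (hS : ContDiff ℝ 1 S) (hf : ContDiff ℝ 2 f)
    (hSsymm : ∀ t, ∀ v w : H, ⟪S t v, w⟫ = ⟪v, S t w⟫)
    (hKskew : ∀ t, ∀ v w : H, ⟪K t v, w⟫ = -⟪v, K t w⟫)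
    (Q N : ℝ → ℝ)
    (hQ : ∀ t, Q t = ‖f t‖ ^ 2) (hQpos : ∀ t, 0 < Q t)
    (hN : ∀ t, N t = (⟪S t (f t), f t⟫ : ℂ).re / Q t) (t : ℝ) :
    deriv N t ≥ (Q t)⁻¹ *
      ((⟪(deriv S t) (f t) + (S t ∘L K t - K t ∘L S t) (f t), f t⟫ : ℂ).re
        - (1 / 2) * ‖deriv f t - S t (f t) - K t (f t)‖ ^ 2) := by
  have hfd := (hf.differentiable two_ne_zero t).hasDerivAt
  have hSd := (hS.differentiable one_ne_zero t).hasDerivAt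
  have hA : (S t : H →ₗ[ℂ] H).IsSymmetric := hSsymm t
  have hB : (K t : H →ₗ[ℂ] H).IsSkewSymmetric := hKskew t
  have hNfun : N = fun s => re ⟪S s (f s), f s⟫_ℂ / ‖f s‖ ^ 2 :=
    funext fun s => by rw [hN, hQ]; rfl
  have hNd := (hSd.re_inner_clm_apply_self hfd hA).fun_div (hfd.norm_sq_of_rclike (𝕜 := ℂ))
    (hQ t ▸ (hQpos t).ne')
  have key := hA.two_mul_re_inner_mul_re_inner_le hB (f t) (deriv f t)
  simp only [ContinuousLinearMap.coe_coe, ← hQ t] at key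
  rw [hNfun, hNd.deriv, ← hQ t, ge_iff_le, le_div_iff₀ (pow_pos (hQpos t) 2)]
  simp only [sub_apply, ContinuousLinearMap.comp_apply, inner_add_left, ← re_to_complex, map_add]
  field_simp
  linear_combination 2 * key

/-- Lower bound on the derivative of the frequency function
`N(t) = ⟨S(t)f(t), f(t)⟩ / Q(t)` (Lemma 3.2). -/
theorem frequency_function_derivative_lower_bound
    {H : Type*} [NormedAddCommGroup H] [InnerProductSpace ℂ H] [CompleteSpace H]
    (S K : ℝ → H →L[ℂ] H) (f : ℝ → H)
    (hS : ContDiff ℝ 1 S) (hK : ContDiff ℝ 1 K) (hf : ContDiff ℝ 2 f)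
    (hSsymm : ∀ t, ∀ v w : H, ⟪S t v, w⟫ = ⟪v, S t w⟫)
    (hKskew : ∀ t, ∀ v w : H, ⟪K t v, w⟫ = -⟪v, K t w⟫)
    (Q N : ℝ → ℝ)
    (hQ : ∀ t, Q t = ‖f t‖ ^ 2) (hQpos : ∀ t, 0 < Q t)
    (hN : ∀ t, N t = (⟪S t (f t), f t⟫ : ℂ).re / Q t) (t : ℝ) :
    deriv N t ≥ (Q t)⁻¹ *
      ((⟪(deriv S t) (f t) + (S t ∘L K t - K t ∘L S t) (f t), f t⟫ : ℂ).re
        - (1 / 2) * ‖deriv f t - S t (f t) - K t (f t)‖ ^ 2) :=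
  frequency_function_derivative_lower_bound_general S K f hS hf hSsymm hKskew Q N hQ hQpos hN t
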